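/- Let ⊢ be a logic with r-partition function ∗. Suppose Γ ⊢ φ, γ ∈ Γ, and the set X = Var(φ) ∖ Var(Γ) of variables occurring in φ but not in Γ is nonempty. Then {γ∗x : x ∈ X} ∪ (Γ ∖ {γ}) ⊢^r φ, where ⊢^r is the containment companion of ⊢. -/

import Mathlib

open FirstOrder FirstOrder.Language

variable {L : FirstOrder.Language.{0, 0}}

/-- The set of variables occurring in a formula (term). -/
def Tvar (φ : L.Term ℕ) : Set ℕ := {x | x ∈ φ.varFinset}

/-- The set of variables occurring in a set of formulas. -/
def SVar (Γ : Set (L.Term ℕ)) : Set ℕ := ⋃ γ ∈ Γ, Tvar γ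

/-- The image of a set of formulas under a substitution. -/
def SubstImg (σ : ℕ → L.Term ℕ) (Γ : Set (L.Term ℕ)) : Set (L.Term ℕ) :=
  (fun ψ => ψ.subst σ) '' Γ

/-- A logic: a substitution-invariant consequence relation on formulas. -/
structure ConsLogic (L : FirstOrder.Language.{0, 0}) where
  deriv : Set (L.Term ℕ) → L.Term ℕ → Prop
  refl : ∀ Γ φ, φ ∈ Γ → deriv Γ φ
  mono : ∀ Γ Δ φ, Γ ⊆ Δ → deriv Γ φ → deriv Δ φ
  cut : ∀ Γ Δ φ, (∀ δ ∈ Δ, deriv Γ δ) → deriv (Γ ∪ Δ) φ → deriv Γ φ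
  substInv : ∀ Γ φ (σ : ℕ → L.Term ℕ), deriv Γ φ → deriv (SubstImg σ Γ) (φ.subst σ)

/-- A consequence relation is finitary. -/
def FinitaryRel (R : Set (L.Term ℕ) → L.Term ℕ → Prop) : Prop :=
  ∀ Γ φ, R Γ φ → ∃ Δ : Finset (L.Term ℕ), ↑Δ ⊆ Γ ∧ R ↑Δ φ

/-- Σ is an antitheorem of the consequence relation `R`. -/
def IsAntitheorem (R : Set (L.Term ℕ) → L.Term ℕ → Prop) (S : Set (L.Term ℕ)) : Prop :=
  ∀ (σ : ℕ → L.Term ℕ) (φ : L.Term ℕ), R (SubstImg σ S) φ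

/-- The containment companion of a logic. -/
def CC (V : ConsLogic L) (Γ : Set (L.Term ℕ)) (φ : L.Term ℕ) : Prop :=
  (V.deriv Γ φ ∧ Tvar φ ⊆ SVar Γ) ∨ ∃ S, IsAntitheorem V.deriv S ∧ S ⊆ Γ

/-- The matrix ⟨A, F⟩ is a model of the consequence relation `R`. -/
def IsMatrixModel (R : Set (L.Term ℕ) → L.Term ℕ → Prop) (A : Type) [L.Structure A]
    (F : Set A) : Prop :=
  ∀ Γ φ, R Γ φ → ∀ h : ℕ → A, (∀ γ ∈ Γ, Term.realize h γ ∈ F) → Term.realize h φ ∈ F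

/-- An isomorphism of matrices: an isomorphism of the underlying algebras mapping the
filter exactly onto the filter. -/
def MatrixIso (A : Type) [L.Structure A] (F : Set A) (B : Type) [L.Structure B]
    (G : Set B) : Prop :=
  ∃ e : L.Equiv A B, ∀ a, a ∈ F ↔ e a ∈ G

/-- The one-element structure. -/
def punitStruct : L.Structure PUnit where
  funMap _ _ := PUnit.unit
  RelMap _ _ := False

/-- An r-direct system of matrices over the join-semilattice `I`. -/
structure RDirectSystem (L : FirstOrder.Language.{0, 0}) (I : Type) [SemilatticeSup I] where
  A : I → Type
  str : ∀ i, L.Structure (A i)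
  F : ∀ i, Set (A i)
  f : ∀ i j, i ≤ j → A i → A j
  f_hom : ∀ i j (h : i ≤ j) (n : ℕ) (g : L.Functions n) (as : Fin n → A i),
    f i j h (@Structure.funMap L (A i) (str i) n g as) =
      @Structure.funMap L (A j) (str j) n g (fun k => f i j h (as k))
  f_id : ∀ i (a : A i), f i i le_rfl a = a
  f_comp : ∀ i j k (hij : i ≤ j) (hjk : j ≤ k) (a : A i),
    f j k hjk (f i j hij a) = f i k (hij.trans hjk) a
  plus_sup : ∀ i j, (F i).Nonempty → (F j).Nonempty → (F (i ⊔ j)).Nonempty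
  f_filter : ∀ i j (h : i ≤ j), (F j).Nonempty → f i j h ⁻¹' F j = F i

/-- The Płonka sum structure over an r-direct system (the language has no constants). -/
def RDirectSystem.plonkaStr {I : Type} [SemilatticeSup I] (S : RDirectSystem L I)
    [IsEmpty (L.Functions 0)] : L.Structure (Σ i, S.A i) where
  funMap {n} g as :=
    match n, g, as with
    | 0, g, _ => isEmptyElim g
    | (m + 1), g, as =>
      ⟨Finset.univ.sup' Finset.univ_nonempty fun k => (as k).1,
        @Structure.funMap L _ (S.str _) _ g fun k =>
          S.f (as k).1 _ (Finset.le_sup' (fun k => (as k).1) (Finset.mem_univ k)) (as k).2⟩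
  RelMap _ _ := False

/-- The filter of the Płonka sum of an r-direct system of matrices. -/
def RDirectSystem.filter {I : Type} [SemilatticeSup I] (S : RDirectSystem L I) :
    Set (Σ i, S.A i) := {a | a.2 ∈ S.F a.1}


/-- The application `t ∗ u` of the binary term `s` to formulas `t` and `u`. -/
def starT (s : L.Term (Fin 2)) (t u : L.Term ℕ) : L.Term ℕ := s.subst ![t, u]

/-- The result `χ(t, z̄)` of substituting the formula `t` for the variable `v` in `χ`. -/
def substVar (χ : L.Term ℕ) (v : ℕ) (t : L.Term ℕ) : L.Term ℕ :=
  χ.subst (fun m => if m = v then t else Term.var m)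

/-- `(ε, δ)` is an instance of one of the partition-function identities P1–P5,
read as term identities for `∗`. -/
def IsPIdentInstance (s : L.Term (Fin 2)) (ε δ : L.Term ℕ) : Prop :=
  (∃ a, ε = starT s a a ∧ δ = a) ∨
  (∃ a b c, ε = starT s a (starT s b c) ∧ δ = starT s (starT s a b) c) ∨
  (∃ a b c, ε = starT s a (starT s b c) ∧ δ = starT s a (starT s c b)) ∨
  (∃ (n : ℕ) (g : L.Functions (n + 1)) (as : Fin (n + 1) → L.Term ℕ) (b : L.Term ℕ),
    ε = starT s (Term.func g as) b ∧ δ = Term.func g (fun k => starT s (as k) b)) ∨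
  (∃ (n : ℕ) (g : L.Functions (n + 1)) (as : Fin (n + 1) → L.Term ℕ) (b : L.Term ℕ),
    ε = starT s b (Term.func g as) ∧ δ = (List.ofFn as).foldl (starT s) b)

/-- The consequence relation `R` has `s` as an r-partition function. -/
def HasRPartitionFunction (R : Set (L.Term ℕ) → L.Term ℕ → Prop) (s : L.Term (Fin 2)) :
    Prop :=
  (∀ i : Fin 2, i ∈ s.varFinset) ∧
  R {Term.var 0, Term.var 1} (starT s (Term.var 0) (Term.var 1)) ∧
  R {starT s (Term.var 0) (Term.var 1)} (Term.var 0) ∧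
  ∀ ε δ, IsPIdentInstance s ε δ → ∀ (χ : L.Term ℕ) (v : ℕ),
    R {substVar χ v ε} (substVar χ v δ) ∧ R {substVar χ v δ} (substVar χ v ε)

/-- The interpretation of the binary term `s` in the structure `A`. -/
def dotOf (A : Type) [L.Structure A] (s : L.Term (Fin 2)) : A → A → A :=
  fun a b => Term.realize ![a, b] s

/-- A binary operation on an `L`-structure is a partition function. -/
def IsPartitionFunction (A : Type) [L.Structure A] (d : A → A → A) : Prop :=
  (∀ a, d a a = a) ∧
  (∀ a b c, d a (d b c) = d (d a b) c) ∧
  (∀ a b c, d a (d b c) = d a (d c b)) ∧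
  (∀ (n : ℕ) (g : L.Functions (n + 1)) (as : Fin (n + 1) → A) (b : A),
    d (Structure.funMap g as) b = Structure.funMap g (fun k => d (as k) b)) ∧
  (∀ (n : ℕ) (g : L.Functions (n + 1)) (as : Fin (n + 1) → A) (b : A),
    d b (Structure.funMap g as) = (List.ofFn as).foldl d b)

/-- The equivalence relation `a ≈ b` induced by a partition function. -/
def PApprox {A : Type} (d : A → A → A) (a b : A) : Prop := d a b = a ∧ d b a = b

/-!
If `γ ∗ x` lies in the premises for some `x`, then `γ` is derivable from them (since
`x ∗ y ⊢ x`), so by cut the premises `Γ ∖ {γ}` may be completed back to `Γ`, and `φ` follows.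
The variables are also right: each `γ ∗ x` carries the variables of `γ` together with `x`,
because both variables occur in `∗`.
-/

namespace FirstOrder.Language.Term

theorem subst_subst {L : Language} {α β γ : Type*} (t : L.Term α) (f : α → L.Term β)
    (g : β → L.Term γ) : (t.subst f).subst g = t.subst fun i => (f i).subst g := by
  induction t with
  | var => rfl
  | func _ _ ih => simp only [subst, ih]

theorem mem_varFinset_subst {L : Language} {α β : Type*} [DecidableEq α] [DecidableEq β]
    (t : L.Term α) (f : α → L.Term β) (v : β) :
    v ∈ (t.subst f).varFinset ↔ ∃ i ∈ t.varFinset, v ∈ (f i).varFinset := by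
  induction t with
  | var => simp [subst, varFinset]
  | func _ ts ih => simp only [subst, varFinset, Finset.mem_biUnion, ih]; grind

end FirstOrder.Language.Term

theorem starT_subst (s : L.Term (Fin 2)) (t u : L.Term ℕ) (σ : ℕ → L.Term ℕ) :
    (starT s t u).subst σ = starT s (t.subst σ) (u.subst σ) := by
  simp only [starT, Term.subst_subst]
  congr 1
  funext i
  fin_cases i <;> rfl

theorem Tvar_starT {s : L.Term (Fin 2)} (hs : ∀ i : Fin 2, i ∈ s.varFinset)
    (t u : L.Term ℕ) : Tvar (starT s t u) = Tvar t ∪ Tvar u := by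
  ext v
  simp only [Tvar, starT, Set.mem_ofPred_eq, Set.mem_union, Term.mem_varFinset_subst,
    Fin.exists_fin_two, Matrix.cons_val_zero, Matrix.cons_val_one]
  grind

theorem Tvar_subset_SVar {Γ : Set (L.Term ℕ)} {γ : L.Term ℕ} (hγ : γ ∈ Γ) :
    Tvar γ ⊆ SVar Γ :=
  Set.subset_biUnion_of_mem hγ

theorem union_subset_SVar_starT_image {s : L.Term (Fin 2)} (hs : ∀ i : Fin 2, i ∈ s.varFinset)
    (Γ : Set (L.Term ℕ)) (γ : L.Term ℕ) {X : Set ℕ} (hX : X.Nonempty) :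
    SVar Γ ∪ X ⊆ SVar ((fun x => starT s γ (Term.var x)) '' X ∪ (Γ \ {γ})) := by
  have hstar : ∀ x ∈ X, Tvar (starT s γ (Term.var x)) ⊆
      SVar ((fun x => starT s γ (Term.var x)) '' X ∪ (Γ \ {γ})) :=
    fun x hx => Tvar_subset_SVar (Or.inl ⟨x, hx, rfl⟩)
  obtain ⟨x₀, hx₀⟩ := hX
  refine Set.union_subset (Set.iUnion₂_subset fun δ hδ => ?_) fun x hx => ?_
  · by_cases hδγ : δ = γ
    · subst hδγ
      exact (hstar x₀ hx₀).trans' (Tvar_starT hs _ _ ▸ Set.subset_union_left)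
    · exact Tvar_subset_SVar (Or.inr ⟨hδ, hδγ⟩)
  · refine hstar x hx ?_
    rw [Tvar_starT hs]
    exact Or.inr (by simp [Tvar, Term.varFinset])

namespace ConsLogic

variable (V : ConsLogic L)

theorem cut_singleton {Δ : Set (L.Term ℕ)} {γ φ : L.Term ℕ} (hγ : V.deriv Δ γ)
    (h : V.deriv (Δ ∪ {γ}) φ) : V.deriv Δ φ :=
  V.cut _ _ _ (fun _ hδ => (Set.mem_singleton_iff.1 hδ) ▸ hγ) h

theorem deriv_starT_left {s : L.Term (Fin 2)} (hpf : HasRPartitionFunction V.deriv s)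
    (t u : L.Term ℕ) : V.deriv {starT s t u} t := by
  have h := V.substInv _ _ (fun n => if n = 0 then t else u) hpf.2.2.1
  simpa [SubstImg, starT_subst, Term.subst] using h

theorem deriv_of_starT_mem {s : L.Term (Fin 2)} (hpf : HasRPartitionFunction V.deriv s)
    {Δ : Set (L.Term ℕ)} {t u : L.Term ℕ} (h : starT s t u ∈ Δ) : V.deriv Δ t :=
  V.mono _ _ _ (Set.singleton_subset_iff.2 h) (V.deriv_starT_left hpf t u)

end ConsLogic

theorem statement_12_general (L : FirstOrder.Language.{0, 0})
    (V : ConsLogic L) (s : L.Term (Fin 2))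
    (hpf : HasRPartitionFunction V.deriv s)
    (Γ : Set (L.Term ℕ)) (φ γ : L.Term ℕ) (hder : V.deriv Γ φ)
    (hne : (Tvar φ \ SVar Γ).Nonempty) :
    CC V ((fun x => starT s γ (Term.var x)) '' (Tvar φ \ SVar Γ) ∪ (Γ \ {γ})) φ := by
  set Δ := (fun x => starT s γ (Term.var x)) '' (Tvar φ \ SVar Γ) ∪ (Γ \ {γ})
  obtain ⟨x₀, hx₀⟩ := hne
  have hγ : V.deriv Δ γ := V.deriv_of_starT_mem hpf (Or.inl ⟨x₀, hx₀, rfl⟩)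
  have hΓ : Γ ⊆ Δ ∪ {γ} :=
    (Set.subset_sdiff_union Γ {γ}).trans (Set.union_subset_union_left _ Set.subset_union_right)
  refine Or.inl ⟨V.cut_singleton hγ (V.mono _ _ _ hΓ hder), ?_⟩
  calc Tvar φ ⊆ SVar Γ ∪ (Tvar φ \ SVar Γ) := by
        rw [Set.union_sdiff_self]; exact Set.subset_union_right
    _ ⊆ SVar Δ := union_subset_SVar_starT_image hpf.1 Γ γ ⟨x₀, hx₀⟩

/-- Let `⊢` be a logic with r-partition function `∗`.  If `Γ ⊢ φ`,
`γ ∈ Γ`, and the set `X = Var(φ) ∖ Var(Γ)` is nonempty, then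
`{γ∗x : x ∈ X} ∪ (Γ ∖ {γ}) ⊢^r φ`. -/
theorem statement_12 (L : FirstOrder.Language.{0, 0}) [IsEmpty (L.Functions 0)]
    (V : ConsLogic L) (s : L.Term (Fin 2))
    (hpf : HasRPartitionFunction V.deriv s)
    (Γ : Set (L.Term ℕ)) (φ γ : L.Term ℕ) (hder : V.deriv Γ φ) (hγ : γ ∈ Γ)
    (hne : (Tvar φ \ SVar Γ).Nonempty) :
    CC V ((fun x => starT s γ (Term.var x)) '' (Tvar φ \ SVar Γ) ∪ (Γ \ {γ})) φ :=
  statement_12_general L V s hpf Γ φ γ hder hne
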